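/- Let u, v, x, y ∈ R^n with n ≥ 2 and λ := (u^T x)(y^T v) ≠ 0, and let M = X_{2n} N X_{2n}, where N has zero diagonal blocks and off-diagonal blocks v u^T (upper right) and x y^T (lower left). Then M^3 = λM, and the minimal polynomial of M is t^3 - λt. -/

import Mathlib

open Matrix BigOperators

def Jmat (n : ℕ) : Matrix (Fin n) (Fin n) ℝ :=
  Matrix.of fun i j => if j = i.rev then 1 else 0

noncomputable def Xmat (n : ℕ) : Matrix (Fin n ⊕ Fin n) (Fin n ⊕ Fin n) ℝ :=
  (Real.sqrt 2)⁻¹ • Matrix.fromBlocks 1 (Jmat n) (Jmat n) (-1)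

/-! Since `X_{2n}² = 1`, conjugation by `X_{2n}` is an algebra automorphism, so `M` has the same
power relations and the same minimal polynomial as the antidiagonal block matrix
`N = [[0, P], [Q, 0]]`, `P = v uᵀ`, `Q = x yᵀ`. Its square is block diagonal with blocks
`P Q = (u·x) v yᵀ` and `Q P`, and `P Q P = λ P`, `Q P Q = λ Q` give `N³ = λ N`. The powers
`1, N, N²` are linearly independent: the off-diagonal blocks isolate the coefficient of `N`, and for
`n ≥ 2` the identity is not proportional to the rank-one matrix `v yᵀ`. So no monic polynomial of
degree below 3 annihilates `N`. -/

open Polynomial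

lemma Jmat_mul_self (n : ℕ) : Jmat n * Jmat n = 1 := by
  ext i j
  rw [mul_apply, Finset.sum_eq_single i.rev (fun b _ hb => by simp [Jmat, hb]) (by simp)]
  simp [Jmat, one_apply, eq_comm]

lemma Xmat_mul_self (n : ℕ) : Xmat n * Xmat n = 1 := by
  have h2 : (√2)⁻¹ * (√2)⁻¹ = (2 : ℝ)⁻¹ := by
    rw [← mul_inv, Real.mul_self_sqrt zero_le_two]
  rw [Xmat, smul_mul_smul_comm, h2, fromBlocks_multiply]
  simp only [Matrix.one_mul, Matrix.mul_one, Jmat_mul_self, Matrix.mul_neg, Matrix.neg_mul,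
    neg_neg, add_neg_cancel, ← two_smul ℝ (1 : Matrix (Fin n) (Fin n) ℝ)]
  rw [← fromBlocks_one, fromBlocks_smul]
  simp [smul_smul]

section Conjugation

variable {R A : Type*} [CommSemiring R] [Semiring A] [Algebra R A] {P : A}

noncomputable def conjAlgEquivOfMulSelfEqOne (hP : P * P = 1) : A ≃ₐ[R] A :=
  MulSemiringAction.toAlgEquiv R A (ConjAct.toConjAct (⟨P, P, hP, hP⟩ : Aˣ))

@[simp]
lemma conjAlgEquivOfMulSelfEqOne_apply (hP : P * P = 1) (a : A) :
    conjAlgEquivOfMulSelfEqOne (R := R) hP a = P * a * P :=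
  rfl

end Conjugation

lemma minpoly_eq_X_pow_three_sub_C_mul_X {R A : Type*} [CommRing R] [Nontrivial R] [Ring A]
    [Algebra R A] {a : A} {c : R} (ha : a ^ 3 = c • a)
    (hind : LinearIndependent R fun i : Fin 3 => a ^ (i : ℕ)) :
    minpoly R a = X ^ 3 - C c * X := by
  have hlt : (C c * X).degree < 3 := (degree_C_mul_X_le c).trans_lt (by decide)
  refine minpoly.eq_of_linearIndependent R a (monic_X_pow_sub hlt) ?_ 3 ?_ hind
  · simp [ha, Algebra.smul_def]
  · rw [degree_sub_eq_left_of_degree_lt (by rwa [degree_X_pow]), degree_X_pow]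

lemma linearIndependent_one_vecMulVec {ι K : Type*} [Fintype ι] [DecidableEq ι] [Nontrivial ι]
    [CommRing K] [IsDomain K] {w z : ι → K} (hw : w ≠ 0) (hz : z ≠ 0) :
    LinearIndependent K ![1, vecMulVec w z] := by
  obtain ⟨i, j, hij⟩ := exists_pair_ne ι
  refine LinearIndependent.pair_iff.mpr fun s t h => ?_
  have entry (k l : ι) : (if k = l then s else 0) + t * (w k * z l) = 0 := by
    simpa [one_apply, vecMulVec_apply] using congr($h k l)
  have hs : s = 0 := by
    have hii := entry i i
    have hjj := entry j j
    have hij' := entry i j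
    have hji := entry j i
    simp only [if_pos, if_neg hij, if_neg hij.symm, zero_add] at hii hjj hij' hji
    -- the 2 × 2 minor of `s • 1 = -t • vecMulVec w z` on rows and columns `i, j` vanishes
    refine pow_eq_zero_iff (n := 2) two_ne_zero |>.mp ?_
    linear_combination (-t * (w j * z j)) * hii + s * hjj + (t * (w j * z i)) * hij'
  subst hs
  refine ⟨rfl, ?_⟩
  simpa [vecMulVec_ne_zero hw hz] using h

lemma vecMulVec_mul_vecMulVec_mul_vecMulVec {l m o p R : Type*} [Fintype m] [Fintype o]
    [CommSemiring R] (a : l → R) (b c : m → R) (d e : o → R) (f : p → R) :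
    vecMulVec a b * vecMulVec c d * vecMulVec e f = ((b ⬝ᵥ c) * (d ⬝ᵥ e)) • vecMulVec a f := by
  rw [vecMulVec_mul_vecMulVec, vecMulVec_mul_vecMulVec, smul_dotProduct, smul_eq_mul,
    vecMulVec_smul]

section BlockAntidiagonal

variable {ι κ R : Type*} [Fintype ι] [Fintype κ] [DecidableEq ι] [DecidableEq κ]
  (P : Matrix ι κ R) (Q : Matrix κ ι R)

lemma fromBlocks_zero_zero_sq [Semiring R] :
    fromBlocks 0 P Q 0 ^ 2 = fromBlocks (P * Q) 0 0 (Q * P) := by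
  simp [sq, fromBlocks_multiply]

lemma fromBlocks_zero_zero_pow_three [Semiring R] {c : R} (hP : P * Q * P = c • P)
    (hQ : Q * P * Q = c • Q) :
    fromBlocks 0 P Q 0 ^ 3 = c • fromBlocks 0 P Q 0 := by
  simp [pow_succ, fromBlocks_multiply, hP, hQ, fromBlocks_smul]

lemma linearIndependent_pow_fromBlocks_zero_zero [Ring R] [NoZeroDivisors R] (hP : P ≠ 0)
    (hPQ : LinearIndependent R ![1, P * Q]) :
    LinearIndependent R fun i : Fin 3 => fromBlocks 0 P Q 0 ^ (i : ℕ) := by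
  refine Fintype.linearIndependent_iff.mpr fun g hg => ?_
  rw [Fin.sum_univ_three] at hg
  simp only [Fin.val_zero, Fin.val_one, Fin.val_two, pow_zero, pow_one, fromBlocks_zero_zero_sq,
    ← fromBlocks_one, fromBlocks_smul, fromBlocks_add, smul_zero, add_zero, zero_add] at hg
  obtain ⟨h₁₁, h₁₂, -, -⟩ := fromBlocks_inj.mp (hg.trans fromBlocks_zero.symm)
  have hg₁ : g 1 = 0 := (smul_eq_zero.mp h₁₂).resolve_right hP
  obtain ⟨hg₀, hg₂⟩ := LinearIndependent.pair_iff.mp hPQ _ _ h₁₁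
  intro i
  fin_cases i <;> assumption

end BlockAntidiagonal

theorem minimal_polynomial_rank_one_blocks (n : ℕ) (hn : 2 ≤ n)
    (u v x y : Fin n → ℝ) (lam : ℝ) (hlam : lam = (u ⬝ᵥ x) * (y ⬝ᵥ v)) (hne : lam ≠ 0)
    (M : Matrix (Fin n ⊕ Fin n) (Fin n ⊕ Fin n) ℝ)
    (hM : M = Xmat n *
        Matrix.fromBlocks 0 (Matrix.vecMulVec v u) (Matrix.vecMulVec x y) 0 * Xmat n) :
    M ^ 3 = lam • M ∧
    minpoly ℝ M = Polynomial.X ^ 3 - Polynomial.C lam * Polynomial.X := by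
  have hux : u ⬝ᵥ x ≠ 0 := left_ne_zero_of_mul (hlam ▸ hne)
  have hyv : y ⬝ᵥ v ≠ 0 := right_ne_zero_of_mul (hlam ▸ hne)
  have hu : u ≠ 0 := by rintro rfl; simp at hux
  have hy : y ≠ 0 := by rintro rfl; simp at hyv
  have hv : v ≠ 0 := by rintro rfl; simp at hyv
  have : Nontrivial (Fin n) := Fin.nontrivial_iff_two_le.mpr hn
  set N := fromBlocks 0 (vecMulVec v u) (vecMulVec x y) 0
  have hN3 : N ^ 3 = lam • N := by
    refine fromBlocks_zero_zero_pow_three _ _ ?_ ?_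
    · rw [vecMulVec_mul_vecMulVec_mul_vecMulVec, hlam]
    · rw [vecMulVec_mul_vecMulVec_mul_vecMulVec, hlam, mul_comm]
  have hNind : LinearIndependent ℝ fun i : Fin 3 => N ^ (i : ℕ) := by
    refine linearIndependent_pow_fromBlocks_zero_zero _ _ (vecMulVec_ne_zero hv hu) ?_
    rw [vecMulVec_mul_vecMulVec]
    exact linearIndependent_one_vecMulVec hv (smul_ne_zero hux hy)
  have hconj : M = conjAlgEquivOfMulSelfEqOne (R := ℝ) (Xmat_mul_self n) N := by
    rw [hM, conjAlgEquivOfMulSelfEqOne_apply]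
  refine ⟨?_, ?_⟩
  · rw [hconj, ← map_pow, hN3, map_smul]
  · rw [hconj, minpoly.algEquiv_eq, minpoly_eq_X_pow_three_sub_C_mul_X hN3 hNind]
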